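/- arXiv:1803.04622 — 5 statements merged into one kernel-verified Lean document; each statement's English description precedes it below -/
import Mathlib

section
/- Let G be a simplicial group and fix l ≥ 0. Suppose that G_n^{(l+1)} := ⋂_{i=n-l}^{n} ker(d_i) is trivial for all n > l. Then G_n^{(n)} = N_n(G) = ⋂_{i=1}^n ker(d_i) is trivial for all n > l. -/
/-!
A simplicial group is given by groups `G n`, face maps `d n i : G (n+1) →* G n`
(for `i ≤ n+1`) and degeneracy maps `s n i : G n →* G (n+1)` (for `i ≤ n`),
subject to the simplicial identities (taken as hypotheses below).
-/

variable (G : ℕ → Type) [∀ n, Group (G n)]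

/-- `piece G d n k` is the subgroup `G_n^{(k)} = ⋂_{i = n-k+1}^{n} ker (d_i : G_n → G_{n-1})`
(the joint kernel of the top `k` face maps), with `G_0^{(0)} = G_0`.
In particular `piece G d n n` is the `n`-th Moore subgroup `N_n(G)`. -/
def piece (d : ∀ n, ℕ → (G (n + 1) →* G n)) : ∀ n, ℕ → Subgroup (G n)
  | 0, _ => ⊤
  | (n + 1), k => ⨅ i ∈ Finset.Icc (n + 2 - k) (n + 1), (d n i).ker

/-- If `G_n^{(l+1)} = ⋂_{i=n-l}^{n} ker d_i` is trivial for all `n > l`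
(writing `n = m + 1`), then the Moore subgroup `N_n(G) = G_n^{(n)}` is trivial
for all `n > l`. -/
theorem moore_length_from_piece
    (d : ∀ n, ℕ → (G (n + 1) →* G n)) (s : ∀ n, ℕ → (G n →* G (n + 1)))
    (hdd : ∀ (n i j : ℕ), i ≤ j → j ≤ n + 1 → ∀ x : G (n + 2),
      d n i (d (n + 1) (j + 1) x) = d n j (d (n + 1) i x))
    (hds₁ : ∀ (n i j : ℕ), i < j → j ≤ n + 1 → ∀ x : G (n + 1),
      d (n + 1) i (s (n + 1) j x) = s n (j - 1) (d n i x))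
    (hds₂ : ∀ (n j : ℕ), j ≤ n → ∀ x : G n, d n j (s n j x) = x)
    (hds₃ : ∀ (n j : ℕ), j ≤ n → ∀ x : G n, d n (j + 1) (s n j x) = x)
    (hds₄ : ∀ (n i j : ℕ), j < i → i ≤ n + 1 → ∀ x : G (n + 1),
      d (n + 1) (i + 1) (s (n + 1) j x) = s n j (d n i x))
    (hss : ∀ (n i j : ℕ), i ≤ j → j ≤ n → ∀ x : G n,
      s (n + 1) i (s n j x) = s (n + 1) (j + 1) (s n i x))
    (l : ℕ)
    (h : ∀ m : ℕ, l < m + 1 → piece G d (m + 1) (l + 1) = ⊥)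
    (m : ℕ) (hm : l < m + 1) :
    piece G d (m + 1) (m + 1) = ⊥ := by
  have h1 := h m hm
  rw [eq_bot_iff] at h1 ⊢
  refine le_trans ?_ h1
  show piece G d (m + 1) (m + 1) ≤ piece G d (m + 1) (l + 1)
  simp only [piece]
  apply biInf_mono
  intro i hi
  simp only [Finset.mem_Icc] at *
  omega
end

section
/- Let G be a simplicial group with N_m(G) trivial for all m > l. Then for every non-negative integer i and every n > i + l, the subgroup G_n^{(n-i)} := ⋂_{j=i+1}^{n} ker(d_j : G_n → G_{n-1}) is trivial. -/
/-!
A simplicial group is given by groups `G n`, face maps `d n i : G (n+1) →* G n`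
(for `i ≤ n+1`) and degeneracy maps `s n i : G n →* G (n+1)` (for `i ≤ n`),
subject to the simplicial identities (taken as hypotheses below).
-/

variable (G : ℕ → Type) [∀ n, Group (G n)]

/-- If the Moore subgroups `N_m(G)` are trivial for all `m > l`, then
for every `i ≥ 0` and every `n > i + l` (written `n = m + 1`) the subgroup
`G_n^{(n-i)} = ⋂_{j=i+1}^{n} ker d_j` is trivial. -/
theorem piece_trivial_of_moore_length
    (d : ∀ n, ℕ → (G (n + 1) →* G n)) (s : ∀ n, ℕ → (G n →* G (n + 1)))
    (hdd : ∀ (n i j : ℕ), i ≤ j → j ≤ n + 1 → ∀ x : G (n + 2),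
      d n i (d (n + 1) (j + 1) x) = d n j (d (n + 1) i x))
    (hds₁ : ∀ (n i j : ℕ), i < j → j ≤ n + 1 → ∀ x : G (n + 1),
      d (n + 1) i (s (n + 1) j x) = s n (j - 1) (d n i x))
    (hds₂ : ∀ (n j : ℕ), j ≤ n → ∀ x : G n, d n j (s n j x) = x)
    (hds₃ : ∀ (n j : ℕ), j ≤ n → ∀ x : G n, d n (j + 1) (s n j x) = x)
    (hds₄ : ∀ (n i j : ℕ), j < i → i ≤ n + 1 → ∀ x : G (n + 1),
      d (n + 1) (i + 1) (s (n + 1) j x) = s n j (d n i x))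
    (hss : ∀ (n i j : ℕ), i ≤ j → j ≤ n → ∀ x : G n,
      s (n + 1) i (s n j x) = s (n + 1) (j + 1) (s n i x))
    (l : ℕ)
    (h : ∀ m : ℕ, l < m → piece G d m m = ⊥)
    (i m : ℕ) (him : i + l < m + 1) :
    piece G d (m + 1) (m + 1 - i) = ⊥ := by
  induction i generalizing m with
  | zero =>
    simpa using h (m + 1) (by omega)
  | succ i ih =>
    obtain ⟨m', rfl⟩ : ∃ m', m = m' + 1 := ⟨m - 1, by omega⟩
    rw [eq_bot_iff]
    intro x hx
    have hx' : ∀ j, i + 2 ≤ j → j ≤ m' + 2 → d (m' + 1) j x = 1 := by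
      intro j hj1 hj2
      simp only [piece, Subgroup.mem_iInf, MonoidHom.mem_ker] at hx
      exact hx j (Finset.mem_Icc.mpr ⟨by omega, hj2⟩)
    -- the face `d_{i+1} x` lies in `piece G d (m'+1) (m'+1-i)`
    have hz : d (m' + 1) (i + 1) x ∈ piece G d (m' + 1) (m' + 1 - i) := by
      simp only [piece, Subgroup.mem_iInf, MonoidHom.mem_ker]
      intro j hj
      rw [Finset.mem_Icc] at hj
      have h1 : i + 1 ≤ j := by omega
      have h2 : j ≤ m' + 1 := hj.2
      rw [← hdd m' (i + 1) j h1 h2 x, hx' (j + 1) (by omega) (by omega), map_one]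
    have hz1 : d (m' + 1) (i + 1) x = 1 := by
      have := ih m' (by omega)
      rw [this] at hz
      simpa using hz
    -- hence `x` lies in the next bigger piece, trivial by IH at level `m'+1`
    have hxbig : x ∈ piece G d (m' + 2) (m' + 2 - i) := by
      simp only [piece, Subgroup.mem_iInf, MonoidHom.mem_ker]
      intro j hj
      rw [Finset.mem_Icc] at hj
      rcases Nat.lt_or_ge j (i + 2) with hlt | hge
      · have : j = i + 1 := by omega
        rw [this]; exact hz1
      · exact hx' j hge hj.2
    have := ih (m' + 1) (by omega)
    rw [this] at hxbig
    simpa using hxbig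
end

section
/- Let G be a simplicial group whose Moore complex has length 1 (N_n(G) = 1 for all n ≥ 2). Then for every n ≥ 2 the Segal map G_n → G_1 ×_{G_0} G_1 ×_{G_0} ⋯ ×_{G_0} G_1 (n factors), given by g ↦ (d_2 d_3 ⋯ d_n g, d_0 d_3 ⋯ d_n g, …, d_0^{n-1} g) and landing in the iterated fibre product over G_0 formed using d_1 and d_0 as structure maps, is a group isomorphism. -/
/-!
A simplicial group is given by groups `G n`, face maps `d n i : G (n+1) →* G n`
(for `i ≤ n+1`) and degeneracy maps `s n i : G n →* G (n+1)` (for `i ≤ n`),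
subject to the simplicial identities (taken as hypotheses below).
-/

variable (G : ℕ → Type) [∀ n, Group (G n)]

/-- Iterated zeroth face map `d_0^j : G (j+1) → G 1`. -/
def dZeroPow (d : ∀ n, ℕ → (G (n + 1) →* G n)) : ∀ j, G (j + 1) → G 1
  | 0, x => x
  | (j + 1), x => dZeroPow d j (d (j + 1) 0 x)

/-- The `j`-th component (0-indexed, `j : Fin (N+1)`) of the Segal map
`G_{N+1} → G_1 ×_{G_0} ⋯ ×_{G_0} G_1` (`N+1` factors): apply the top face maps
to cut the simplex down to level `j+1` and then apply `d_0` `j` times. -/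
def segComp (d : ∀ n, ℕ → (G (n + 1) →* G n)) : ∀ N, Fin (N + 1) → G (N + 1) → G 1
  | 0, _, g => g
  | (N + 1), j, g =>
    if h : (j : ℕ) < N + 1 then segComp d N ⟨j, h⟩ (d (N + 1) (N + 2) g)
    else dZeroPow G d (N + 1) g

/-- The iterated fibre product `G_1 ×_{G_0} G_1 ×_{G_0} ⋯ ×_{G_0} G_1` (`n` factors),
formed using `d_1` and `d_0 : G_1 → G_0` as structure maps, as a subgroup of
the direct product `(Fin n) → G_1`. -/
def segalSubgroup (d : ∀ n, ℕ → (G (n + 1) →* G n)) (n : ℕ) :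
    Subgroup (Fin n → G 1) where
  carrier := {f | ∀ (j : ℕ) (hj : j + 1 < n),
    d 0 1 (f ⟨j + 1, hj⟩) = d 0 0 (f ⟨j, Nat.lt_of_succ_lt hj⟩)}
  one_mem' := by intro j hj; simp
  mul_mem' := by
    intro f g hf hg j hj
    simp only [Pi.mul_apply, map_mul, hf j hj, hg j hj]
  inv_mem' := by
    intro f hf j hj
    simp only [Pi.inv_apply, map_inv, hf j hj]

section Aux
variable (d : ∀ n, ℕ → (G (n + 1) →* G n)) (s : ∀ n, ℕ → (G n →* G (n + 1)))

theorem dZeroPow_mul : ∀ j (x y : G (j + 1)),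
    dZeroPow G d j (x * y) = dZeroPow G d j x * dZeroPow G d j y
  | 0, _, _ => rfl
  | (j + 1), x, y => by
    show dZeroPow G d j (d (j + 1) 0 (x * y)) = _
    rw [map_mul]
    exact dZeroPow_mul j _ _

theorem dZeroPow_inv : ∀ j (x : G (j + 1)),
    dZeroPow G d j x⁻¹ = (dZeroPow G d j x)⁻¹
  | 0, _ => rfl
  | (j + 1), x => by
    show dZeroPow G d j (d (j + 1) 0 x⁻¹) = _
    rw [map_inv]
    exact dZeroPow_inv j _

theorem segComp_mul : ∀ N (j : Fin (N + 1)) (x y : G (N + 1)),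
    segComp G d N j (x * y) = segComp G d N j x * segComp G d N j y
  | 0, _, _, _ => rfl
  | (N + 1), j, x, y => by
    by_cases h : (j : ℕ) < N + 1
    · simp only [segComp, dif_pos h, map_mul]
      exact segComp_mul N _ _ _
    · simp only [segComp, dif_neg h]
      exact dZeroPow_mul G d (N + 1) x y

theorem segComp_inv : ∀ N (j : Fin (N + 1)) (x : G (N + 1)),
    segComp G d N j x⁻¹ = (segComp G d N j x)⁻¹
  | 0, _, _ => rfl
  | (N + 1), j, x => by
    by_cases h : (j : ℕ) < N + 1
    · simp only [segComp, dif_pos h, map_inv]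
      exact segComp_inv N _ _
    · simp only [segComp, dif_neg h]
      exact dZeroPow_inv G d (N + 1) x

theorem segComp_lt (N j : ℕ) (hj : j < N + 1) (hj' : j < N + 2) (g : G (N + 2)) :
    segComp G d (N + 1) ⟨j, hj'⟩ g = segComp G d N ⟨j, hj⟩ (d (N + 1) (N + 2) g) := by
  simp only [segComp, dif_pos hj]

theorem segComp_last : ∀ N (hN : N < N + 1) (g : G (N + 1)),
    segComp G d N ⟨N, hN⟩ g = dZeroPow G d N g
  | 0, _, _ => rfl
  | (N + 1), _, g => by
    simp only [segComp]
    rw [dif_neg (lt_irrefl (N + 1))]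


theorem segComp_shift (hdd : ∀ (n i j : ℕ), i ≤ j → j ≤ n + 1 → ∀ x : G (n + 2),
      d n i (d (n + 1) (j + 1) x) = d n j (d (n + 1) i x)) : ∀ N (j : ℕ) (hj : j < N + 1) (hj' : j + 1 < N + 2) (g : G (N + 2)),
    segComp G d N ⟨j, hj⟩ (d (N + 1) 0 g) = segComp G d (N + 1) ⟨j + 1, hj'⟩ g := by
  intro N
  induction N with
  | zero =>
    intro j hj _ g
    have hj0 : j = 0 := by omega
    subst hj0
    rfl
  | succ N ih =>
    intro j hj hj' g
    rcases Nat.lt_or_ge j (N + 1) with h | h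
    · rw [segComp_lt G d N j h hj (d (N + 2) 0 g),
        ← hdd (N + 1) 0 (N + 2) (by omega) (by omega) g,
        ih j h (by omega) (d (N + 2) (N + 3) g),
        segComp_lt G d (N + 1) (j + 1) (by omega) hj' g]
    · have hjN : j = N + 1 := by omega
      subst hjN
      rw [segComp_last G d (N + 1) hj (d (N + 2) 0 g),
        segComp_last G d (N + 2) hj' g]
      rfl

theorem d1_dZeroPow (hdd : ∀ (n i j : ℕ), i ≤ j → j ≤ n + 1 → ∀ x : G (n + 2),
      d n i (d (n + 1) (j + 1) x) = d n j (d (n + 1) i x)) : ∀ k (z : G (k + 2)),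
    d 0 1 (dZeroPow G d (k + 1) z) = d 0 0 (dZeroPow G d k (d (k + 1) (k + 2) z))
  | 0, z => by
    show d 0 1 (d 1 0 z) = d 0 0 (d 1 2 z)
    exact (hdd 0 0 1 (by omega) (by omega) z).symm
  | (k + 1), z => by
    show d 0 1 (dZeroPow G d (k + 1) (d (k + 2) 0 z)) = _
    rw [d1_dZeroPow hdd k (d (k + 2) 0 z), ← hdd (k + 1) 0 (k + 2) (by omega) (by omega) z]
    rfl

theorem mem_segal (hdd : ∀ (n i j : ℕ), i ≤ j → j ≤ n + 1 → ∀ x : G (n + 2),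
      d n i (d (n + 1) (j + 1) x) = d n j (d (n + 1) i x)) : ∀ N (g : G (N + 1)) (j : ℕ) (hj : j + 1 < N + 1),
    d 0 1 (segComp G d N ⟨j + 1, hj⟩ g) = d 0 0 (segComp G d N ⟨j, Nat.lt_of_succ_lt hj⟩ g) := by
  intro N
  induction N with
  | zero => intro g j hj; omega
  | succ N ih =>
    intro g j hj
    rcases Nat.lt_or_ge (j + 1) (N + 1) with h | h
    · rw [segComp_lt G d N (j + 1) h hj g,
        segComp_lt G d N j (by omega) (Nat.lt_of_succ_lt hj) g]
      exact ih (d (N + 1) (N + 2) g) j h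
    · have hjN : j = N := by omega
      subst hjN
      rw [segComp_last G d (j + 1) hj g,
        segComp_lt G d j j (by omega) (Nat.lt_of_succ_lt hj) g,
        segComp_last G d j (by omega) (d (j + 1) (j + 2) g)]
      exact d1_dZeroPow G d hdd j g

theorem eq_one_of_faces (hlen : ∀ m : ℕ, piece G d (m + 2) (m + 2) = ⊥) (k : ℕ) (g : G (k + 2))
    (hfaces : ∀ i, 1 ≤ i → i ≤ k + 2 → d (k + 1) i g = 1) : g = 1 := by
  have hmem : g ∈ piece G d (k + 2) (k + 2) := by
    simp only [piece, Subgroup.mem_iInf, Finset.mem_Icc, MonoidHom.mem_ker]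
    intro i hi
    exact hfaces i (by omega) (by omega)
  rw [hlen k, Subgroup.mem_bot] at hmem
  exact hmem

theorem kerHorn
    (hdd : ∀ (n i j : ℕ), i ≤ j → j ≤ n + 1 → ∀ x : G (n + 2),
      d n i (d (n + 1) (j + 1) x) = d n j (d (n + 1) i x))
    (hds₂ : ∀ (n j : ℕ), j ≤ n → ∀ x : G n, d n j (s n j x) = x)
    (hds₃ : ∀ (n j : ℕ), j ≤ n → ∀ x : G n, d n (j + 1) (s n j x) = x)
    (hds₄ : ∀ (n i j : ℕ), j < i → i ≤ n + 1 → ∀ x : G (n + 1),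
      d (n + 1) (i + 1) (s (n + 1) j x) = s n j (d n i x))
    (hlen : ∀ m : ℕ, piece G d (m + 2) (m + 2) = ⊥) :
    ∀ k (g : G (k + 2)), d (k + 1) 0 g = 1 → d (k + 1) (k + 2) g = 1 → g = 1 := by
  intro k
  induction k with
  | zero =>
    intro g h0 h2
    set b := d 1 1 g with hb
    have hb1 : d 0 1 b = 1 := by
      have h := hdd 0 1 1 le_rfl (by omega) g
      rw [hb, ← h, h2, map_one]
    have e1 : d 1 1 (g * (s 1 0 b)⁻¹) = 1 := by
      rw [map_mul, map_inv, hds₃ 1 0 (by omega) b, ← hb, mul_inv_cancel]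
    have e2 : d 1 2 (g * (s 1 0 b)⁻¹) = 1 := by
      rw [map_mul, map_inv, h2, hds₄ 0 1 0 (by omega) (by omega) b, hb1, map_one,
        inv_one, one_mul]
    have hg1 : g * (s 1 0 b)⁻¹ = 1 := by
      apply eq_one_of_faces G d hlen 0
      intro i h1 h2'
      interval_cases i
      · exact e1
      · exact e2
    have hgb : g = s 1 0 b := by
      rw [mul_inv_eq_one] at hg1
      exact hg1
    have hbone : b = 1 := by
      rw [hgb, hds₂ 1 0 (by omega) b] at h0
      exact h0
    rw [hgb, hbone, map_one]
  | succ k ih =>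
    intro g h0 htop
    have h0' : d (k + 2) 0 g = 1 := h0
    have htop' : d (k + 2) (k + 3) g = 1 := htop
    apply eq_one_of_faces G d hlen (k + 1)
    intro i h1 h3
    show d (k + 2) i g = 1
    rcases Nat.lt_or_ge i (k + 3) with h | h
    · apply ih (d (k + 2) i g)
      · obtain ⟨i', rfl⟩ : ∃ i', i = i' + 1 := ⟨i - 1, by omega⟩
        rw [hdd (k + 1) 0 i' (by omega) (by omega) g, h0', map_one]
      · rw [← hdd (k + 1) i (k + 2) (by omega) (by omega) g, htop', map_one]
    · have hik : i = k + 3 := by omega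
      subst hik
      exact htop

theorem segComp_ker
    (hdd : ∀ (n i j : ℕ), i ≤ j → j ≤ n + 1 → ∀ x : G (n + 2),
      d n i (d (n + 1) (j + 1) x) = d n j (d (n + 1) i x))
    (hds₂ : ∀ (n j : ℕ), j ≤ n → ∀ x : G n, d n j (s n j x) = x)
    (hds₃ : ∀ (n j : ℕ), j ≤ n → ∀ x : G n, d n (j + 1) (s n j x) = x)
    (hds₄ : ∀ (n i j : ℕ), j < i → i ≤ n + 1 → ∀ x : G (n + 1),
      d (n + 1) (i + 1) (s (n + 1) j x) = s n j (d n i x))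
    (hlen : ∀ m : ℕ, piece G d (m + 2) (m + 2) = ⊥) :
    ∀ N (g : G (N + 1)), (∀ j : Fin (N + 1), segComp G d N j g = 1) → g = 1 := by
  intro N
  induction N with
  | zero => intro g h; exact h 0
  | succ N ih =>
    intro g h
    have htop : d (N + 1) (N + 2) g = 1 := by
      apply ih
      intro j
      rcases j with ⟨j, hj⟩
      rw [← segComp_lt G d N j hj (by omega) g]
      exact h ⟨j, by omega⟩
    have h0 : d (N + 1) 0 g = 1 := by
      apply ih
      intro j
      rcases j with ⟨j, hj⟩
      rw [segComp_shift G d hdd N j hj (by omega) g]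
      exact h ⟨j + 1, by omega⟩
    exact kerHorn G d s hdd hds₂ hds₃ hds₄ hlen N g h0 htop

def sZeroPow : ∀ k, G 1 → G (k + 1)
  | 0, u => u
  | (k + 1), u => s (k + 1) 0 (sZeroPow k u)

theorem sZeroPow_dZero (hds₂ : ∀ (n j : ℕ), j ≤ n → ∀ x : G n, d n j (s n j x) = x) :
    ∀ k (u : G 1), dZeroPow G d k (sZeroPow G s k u) = u
  | 0, _ => rfl
  | (k + 1), u => by
    show dZeroPow G d k (d (k + 1) 0 (s (k + 1) 0 (sZeroPow G s k u))) = u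
    rw [hds₂ (k + 1) 0 (by omega) (sZeroPow G s k u)]
    exact sZeroPow_dZero hds₂ k u

theorem sZeroPow_dTop
    (hds₄ : ∀ (n i j : ℕ), j < i → i ≤ n + 1 → ∀ x : G (n + 1),
      d (n + 1) (i + 1) (s (n + 1) j x) = s n j (d n i x)) :
    ∀ k (u : G 1), d 0 1 u = 1 → d (k + 1) (k + 2) (sZeroPow G s (k + 1) u) = 1
  | 0, u, hu => by
    show d 1 2 (s 1 0 u) = 1
    rw [hds₄ 0 1 0 (by omega) (by omega) u, hu, map_one]
  | (k + 1), u, hu => by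
    show d (k + 2) (k + 3) (s (k + 2) 0 (sZeroPow G s (k + 1) u)) = 1
    rw [hds₄ (k + 1) (k + 2) 0 (by omega) (by omega) (sZeroPow G s (k + 1) u),
      sZeroPow_dTop hds₄ k u hu, map_one]

theorem dZeroPow_sLast
    (hds₁ : ∀ (n i j : ℕ), i < j → j ≤ n + 1 → ∀ x : G (n + 1),
      d (n + 1) i (s (n + 1) j x) = s n (j - 1) (d n i x)) :
    ∀ k (x : G (k + 1)),
      dZeroPow G d (k + 1) (s (k + 1) (k + 1) x) = s 0 0 (d 0 0 (dZeroPow G d k x))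
  | 0, x => by
    show d 1 0 (s 1 1 x) = s 0 0 (d 0 0 x)
    exact hds₁ 0 0 1 (by omega) (by omega) x
  | (k + 1), x => by
    show dZeroPow G d (k + 1) (d (k + 2) 0 (s (k + 2) (k + 2) x)) = _
    rw [hds₁ (k + 1) 0 (k + 2) (by omega) (by omega) x]
    have e : k + 2 - 1 = k + 1 := by omega
    rw [e, dZeroPow_sLast hds₁ k (d (k + 1) 0 x)]
    rfl

theorem segComp_surj
    (hdd : ∀ (n i j : ℕ), i ≤ j → j ≤ n + 1 → ∀ x : G (n + 2),
      d n i (d (n + 1) (j + 1) x) = d n j (d (n + 1) i x))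
    (hds₁ : ∀ (n i j : ℕ), i < j → j ≤ n + 1 → ∀ x : G (n + 1),
      d (n + 1) i (s (n + 1) j x) = s n (j - 1) (d n i x))
    (hds₂ : ∀ (n j : ℕ), j ≤ n → ∀ x : G n, d n j (s n j x) = x)
    (hds₃ : ∀ (n j : ℕ), j ≤ n → ∀ x : G n, d n (j + 1) (s n j x) = x)
    (hds₄ : ∀ (n i j : ℕ), j < i → i ≤ n + 1 → ∀ x : G (n + 1),
      d (n + 1) (i + 1) (s (n + 1) j x) = s n j (d n i x)) :
    ∀ N (f : Fin (N + 1) → G 1),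
      (∀ (j : ℕ) (hj : j + 1 < N + 1),
        d 0 1 (f ⟨j + 1, hj⟩) = d 0 0 (f ⟨j, Nat.lt_of_succ_lt hj⟩)) →
      ∃ g : G (N + 1), ∀ j : Fin (N + 1), segComp G d N j g = f j := by
  intro N
  induction N with
  | zero =>
    intro f _
    refine ⟨f 0, fun j => ?_⟩
    have hj : j = 0 := Fin.ext (by omega)
    subst hj
    rfl
  | succ N ih =>
    intro f hf
    obtain ⟨x, hx⟩ := ih (fun j => f ⟨j.1, Nat.lt_succ_of_lt j.2⟩)
      (fun j hj => hf j (Nat.lt_succ_of_lt hj))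
    set y : G 1 := f ⟨N + 1, by omega⟩ with hy
    have compat : d 0 1 y = d 0 0 (dZeroPow G d N x) := by
      have h1 := hf N (by omega)
      have h2 := hx ⟨N, by omega⟩
      rw [segComp_last G d N (by omega) x] at h2
      rw [← hy] at h1
      rw [h1, h2]
    set u : G 1 := y * (s 0 0 (d 0 1 y))⁻¹ with hu
    have hu1 : d 0 1 u = 1 := by
      rw [hu, map_mul, map_inv, hds₃ 0 0 (le_refl 0) (d 0 1 y), mul_inv_cancel]
    set g : G (N + 2) := sZeroPow G s (N + 1) u * s (N + 1) (N + 1) x with hg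
    have htop : d (N + 1) (N + 2) g = x := by
      rw [hg, map_mul, sZeroPow_dTop G d s hds₄ N u hu1,
        hds₃ (N + 1) (N + 1) le_rfl x, one_mul]
    have hz : dZeroPow G d (N + 1) g = y := by
      rw [hg, dZeroPow_mul G d (N + 1), sZeroPow_dZero G d s hds₂ (N + 1) u,
        dZeroPow_sLast G d s hds₁ N x, ← compat, hu]
      rw [inv_mul_cancel_right]
    refine ⟨g, fun j => ?_⟩
    rcases j with ⟨j, hj⟩
    rcases Nat.lt_or_ge j (N + 1) with h | h
    · rw [segComp_lt G d N j h hj g, htop]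
      exact hx ⟨j, h⟩
    · have hjN : j = N + 1 := by omega
      subst hjN
      rw [segComp_last G d (N + 1) hj g, hz, hy]

end Aux

/-- Let `G` be a simplicial group whose Moore complex has length 1
(`N_n(G)` trivial for all `n ≥ 2`).  Then for every `n ≥ 2` (written `n = N + 2`) the
Segal map `G_n → G_1 ×_{G_0} ⋯ ×_{G_0} G_1` (`n` factors), whose `j`-th component is
`g ↦ d_0^{j-1} (d_{j+1} ⋯ d_n g)`, is a group isomorphism onto the iterated fibre
product: it lands in the fibre product, is multiplicative, injective, and surjective
onto the fibre product. -/
theorem segal_map_iso_of_moore_length_one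
    (d : ∀ n, ℕ → (G (n + 1) →* G n)) (s : ∀ n, ℕ → (G n →* G (n + 1)))
    (hdd : ∀ (n i j : ℕ), i ≤ j → j ≤ n + 1 → ∀ x : G (n + 2),
      d n i (d (n + 1) (j + 1) x) = d n j (d (n + 1) i x))
    (hds₁ : ∀ (n i j : ℕ), i < j → j ≤ n + 1 → ∀ x : G (n + 1),
      d (n + 1) i (s (n + 1) j x) = s n (j - 1) (d n i x))
    (hds₂ : ∀ (n j : ℕ), j ≤ n → ∀ x : G n, d n j (s n j x) = x)
    (hds₃ : ∀ (n j : ℕ), j ≤ n → ∀ x : G n, d n (j + 1) (s n j x) = x)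
    (hds₄ : ∀ (n i j : ℕ), j < i → i ≤ n + 1 → ∀ x : G (n + 1),
      d (n + 1) (i + 1) (s (n + 1) j x) = s n j (d n i x))
    (hss : ∀ (n i j : ℕ), i ≤ j → j ≤ n → ∀ x : G n,
      s (n + 1) i (s n j x) = s (n + 1) (j + 1) (s n i x))
    (hlen : ∀ m : ℕ, piece G d (m + 2) (m + 2) = ⊥) (N : ℕ) :
    (∀ g : G (N + 2), (fun j => segComp G d (N + 1) j g) ∈ segalSubgroup G d (N + 2)) ∧
    (∀ g h : G (N + 2), ∀ j : Fin (N + 2),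
      segComp G d (N + 1) j (g * h) = segComp G d (N + 1) j g * segComp G d (N + 1) j h) ∧
    Function.Injective (fun (g : G (N + 2)) (j : Fin (N + 2)) => segComp G d (N + 1) j g) ∧
    (∀ f ∈ segalSubgroup G d (N + 2), ∃ g : G (N + 2),
      (fun j => segComp G d (N + 1) j g) = f) := by
  refine ⟨?_, ?_, ?_, ?_⟩
  · intro g j hj
    exact mem_segal G d hdd (N + 1) g j hj
  · intro g h j
    exact segComp_mul G d (N + 1) j g h
  · intro a b hab
    have h1 : ∀ j : Fin (N + 2), segComp G d (N + 1) j (a * b⁻¹) = 1 := by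
      intro j
      rw [segComp_mul G d (N + 1) j a b⁻¹, segComp_inv G d (N + 1) j b]
      have h2 : segComp G d (N + 1) j a = segComp G d (N + 1) j b := congrFun hab j
      rw [h2, mul_inv_cancel]
    have h3 := segComp_ker G d s hdd hds₂ hds₃ hds₄ hlen (N + 1) (a * b⁻¹) h1
    rwa [mul_inv_eq_one] at h3
  · intro f hf
    obtain ⟨g, hg⟩ := segComp_surj G d s hdd hds₁ hds₂ hds₃ hds₄ (N + 1) f
      (fun j hj => hf j hj)
    exact ⟨g, funext hg⟩
end

section
/- Let A be a cocommutative Hopf algebra over a field k, f : A → B a Hopf algebra morphism admitting a Hopf algebra section s : B → A (f ∘ s = id_B). Then the map Hker(f) ⊗ B → A sending x ⊗ b to x · s(b) is a linear isomorphism, where Hker(f) = { a ∈ A : a_{(1)} ⊗ f(a_{(2)}) = a ⊗ 1_B }. -/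
/-!
Write `ρ = (id ⊗ f) ∘ Δ : A → A ⊗ B`, an algebra map whose coinvariants form `hopfKer f`, and
`ι₁ a = a ⊗ 1`, `ι₂ b = 1 ⊗ b`. In the convolution rings of linear maps out of `A` and `B`, the
map `h ∘ S` is the inverse of `h` for every algebra map `h`; applied to `ρ ∘ s = (ι₁ ∘ s) * ι₂`
this gives `ρ ∘ s ∘ S = (ι₂ ∘ S) * (ι₁ ∘ s ∘ S)`. Hence `g = id * (s ∘ S ∘ f)`, i.e.
`a ↦ a₁ s(S f(a₂))`, satisfies `ρ ∘ g = ι₁ ∘ g`, so it takes values in `hopfKer f`; and since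
`g * (s ∘ f) = id`, the map `a ↦ g a₁ ⊗ f a₂` is a right inverse of `x ⊗ b ↦ x s(b)`.
Conversely `a ⊗ c ↦ a s(S c₁) ⊗ c₂` sends `ρ (x s(b)) = (x ⊗ 1) ρ (s b)` back to `x ⊗ b` for
coinvariant `x`; as `B` is flat over `k`, this gives injectivity.
-/

open TensorProduct

variable {k A B : Type*} [Field k] [Ring A] [Ring B] [HopfAlgebra k A] [HopfAlgebra k B]

/-- For cocommutative `A`, the Hopf kernel of `f : A → B` is
`Hker f = {a : a₍₁₎ ⊗ f (a₍₂₎) = a ⊗ 1}`. -/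
noncomputable def hopfKer (f : A →ₐc[k] B) : Submodule k A :=
  LinearMap.ker
    (LinearMap.lTensor A f.toLinearMap ∘ₗ Coalgebra.comul - (TensorProduct.mk k A B).flip 1)

/-- The canonical map `Hker f ⊗ B → A`, `x ⊗ b ↦ x * s b`. -/
noncomputable def radfordMap (f : A →ₐc[k] B) (s : B →ₐc[k] A) :
    hopfKer f ⊗[k] B →ₗ[k] A :=
  TensorProduct.lift <| LinearMap.mk₂ k (fun (x : hopfKer f) (b : B) => (x : A) * s b)
    (by intro x y b; simp [add_mul])
    (by intro c x b; simp [smul_mul_assoc])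
    (by intro x b b'; simp [mul_add])
    (by intro c x b; simp [map_smul, mul_smul_comm])

open Coalgebra HopfAlgebra WithConv

section Convolution

variable {R C D L M : Type*} [CommSemiring R] [Semiring L] [Algebra R L] [Semiring M] [Algebra R M]

lemma AlgHom.comp_antipode_convMul_self [Semiring C] [HopfAlgebra R C] (h : C →ₐ[R] L) :
    toConv (h.toLinearMap ∘ₗ antipode R) * toConv h.toLinearMap = 1 := by
  ext c
  simp [(ℛ R c).convMul_apply, ← map_mul, ← map_sum, sum_antipode_mul_eq_algebraMap_counit]

lemma AlgHom.convMul_comp_antipode_self [Semiring C] [HopfAlgebra R C] (h : C →ₐ[R] L) :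
    toConv h.toLinearMap * toConv (h.toLinearMap ∘ₗ antipode R) = 1 := by
  ext c
  simp [(ℛ R c).convMul_apply, ← map_mul, ← map_sum, sum_mul_antipode_eq_algebraMap_counit]

variable [AddCommMonoid C] [Module R C] [Coalgebra R C]

lemma TensorProduct.map_comp_comul_eq_convMul (φ : C →ₗ[R] L) (ψ : C →ₗ[R] M) :
    toConv (map φ ψ ∘ₗ comul) =
      toConv (Algebra.TensorProduct.includeLeft.toLinearMap ∘ₗ φ) *
        toConv (Algebra.TensorProduct.includeRight.toLinearMap ∘ₗ ψ) := by
  ext c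
  simp [(ℛ R c).convMul_apply, ← (ℛ R c).eq]

lemma LinearMap.convMul_comp_coalgHom_eq_one [AddCommMonoid D] [Module R D] [Coalgebra R D]
    {u v : C →ₗ[R] L} (huv : toConv u * toConv v = 1) (h : D →ₗc[R] C) :
    toConv (u ∘ₗ h.toLinearMap) * toConv (v ∘ₗ h.toLinearMap) = 1 := by
  calc _ = toConv ((toConv u * toConv v).ofConv ∘ₗ h.toLinearMap) :=
        WithConv.ext (convMul_comp_coalgHom_distrib _ _ h).symm
    _ = 1 := by
        rw [huv]
        ext c
        simp

end Convolution

section HopfProjection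

variable {R H K : Type*} [CommSemiring R] [Semiring H] [Semiring K] [HopfAlgebra R H]
  [HopfAlgebra R K] (f : H →ₐc[R] K) (s : K →ₐc[R] H)

local notation "ι₁" => AlgHom.toLinearMap (Algebra.TensorProduct.includeLeft : H →ₐ[R] H ⊗[R] K)
local notation "ι₂" => AlgHom.toLinearMap (Algebra.TensorProduct.includeRight : K →ₐ[R] H ⊗[R] K)

noncomputable def rightCoaction : H →ₐ[R] H ⊗[R] K :=
  (Algebra.TensorProduct.map (AlgHom.id R H) (f : H →ₐ[R] K)).comp (Bialgebra.comulAlgHom R H)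

lemma rightCoaction_toLinearMap :
    (rightCoaction f).toLinearMap = LinearMap.lTensor H f.toLinearMap ∘ₗ comul := rfl

lemma rightCoaction_eq_convMul :
    toConv (rightCoaction f).toLinearMap = toConv ι₁ * toConv (ι₂ ∘ₗ f.toLinearMap) := by
  rw [rightCoaction_toLinearMap, LinearMap.lTensor, map_comp_comul_eq_convMul, LinearMap.comp_id]

lemma rightCoaction_comp_section (hfs : ∀ b, f (s b) = b) :
    (rightCoaction f).toLinearMap ∘ₗ s.toLinearMap = map s.toLinearMap LinearMap.id ∘ₗ comul := by
  have hcomul (b : K) : comul (s b) = map s.toLinearMap s.toLinearMap (comul b) :=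
    (LinearMap.congr_fun (CoalgHomClass.map_comp_comul s) b).symm
  have hfs' : f.toLinearMap ∘ₗ s.toLinearMap = LinearMap.id := LinearMap.ext hfs
  ext b
  change LinearMap.lTensor H f.toLinearMap (comul (s b)) = _
  rw [hcomul, LinearMap.lTensor_map, hfs']
  rfl

/-- In Sweedler notation, `ρ (s (S b)) = s (S b₂) ⊗ S b₁`. -/
lemma rightCoaction_comp_section_comp_antipode (hfs : ∀ b, f (s b) = b) :
    toConv ((rightCoaction f).toLinearMap ∘ₗ s.toLinearMap ∘ₗ antipode R) =
      toConv (ι₂ ∘ₗ antipode R) * toConv (ι₁ ∘ₗ s.toLinearMap ∘ₗ antipode R) := by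
  refine left_inv_eq_right_inv
    (((rightCoaction f).comp (s : K →ₐ[R] H)).comp_antipode_convMul_self) ?_
  have hρs : toConv ((rightCoaction f).toLinearMap ∘ₗ s.toLinearMap) =
      toConv (ι₁ ∘ₗ s.toLinearMap) * toConv ι₂ := by
    rw [rightCoaction_comp_section f s hfs, map_comp_comul_eq_convMul, LinearMap.comp_id]
  have hinv : toConv (ι₁ ∘ₗ s.toLinearMap) * toConv (ι₁ ∘ₗ s.toLinearMap ∘ₗ antipode R) = 1 :=
    (Algebra.TensorProduct.includeLeft.comp (s : K →ₐ[R] H)).convMul_comp_antipode_self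
  change toConv ((rightCoaction f).toLinearMap ∘ₗ s.toLinearMap) * _ = 1
  rw [hρs, mul_assoc, ← mul_assoc (toConv ι₂), AlgHom.convMul_comp_antipode_self, one_mul, hinv]

noncomputable def hopfKerProj : H →ₗ[R] H :=
  (toConv LinearMap.id * toConv (s.toLinearMap ∘ₗ antipode R ∘ₗ f.toLinearMap)).ofConv

lemma hopfKerProj_convMul :
    toConv (hopfKerProj f s) * toConv (s.toLinearMap ∘ₗ f.toLinearMap) = toConv LinearMap.id := by
  have hs : toConv (s.toLinearMap ∘ₗ antipode R) * toConv s.toLinearMap = 1 :=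
    (s : K →ₐ[R] H).comp_antipode_convMul_self
  have hsf : toConv (s.toLinearMap ∘ₗ antipode R ∘ₗ f.toLinearMap) *
      toConv (s.toLinearMap ∘ₗ f.toLinearMap) = 1 :=
    LinearMap.convMul_comp_coalgHom_eq_one hs (f : H →ₗc[R] K)
  rw [hopfKerProj, toConv_ofConv, mul_assoc, hsf, mul_one]

lemma rightCoaction_comp_hopfKerProj (hfs : ∀ b, f (s b) = b) :
    (rightCoaction f).toLinearMap ∘ₗ hopfKerProj f s = ι₁ ∘ₗ hopfKerProj f s := by
  have hρsSf :
      toConv ((rightCoaction f).toLinearMap ∘ₗ s.toLinearMap ∘ₗ antipode R ∘ₗ f.toLinearMap) =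
        toConv (ι₂ ∘ₗ antipode R ∘ₗ f.toLinearMap) *
          toConv (ι₁ ∘ₗ s.toLinearMap ∘ₗ antipode R ∘ₗ f.toLinearMap) :=
    WithConv.ext (congrArg (fun x ↦ x.ofConv ∘ₗ f.toLinearMap)
      (rightCoaction_comp_section_comp_antipode f s hfs) |>.trans
      (LinearMap.convMul_comp_coalgHom_distrib _ _ (f : H →ₗc[R] K)))
  have hι₂ : toConv (ι₂ ∘ₗ f.toLinearMap) * toConv (ι₂ ∘ₗ antipode R ∘ₗ f.toLinearMap) = 1 :=
    LinearMap.convMul_comp_coalgHom_eq_one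
      (Algebra.TensorProduct.includeRight : K →ₐ[R] H ⊗[R] K).convMul_comp_antipode_self
      (f : H →ₗc[R] K)
  apply WithConv.toConv_injective
  rw [hopfKerProj, LinearMap.algHom_comp_convMul_distrib, LinearMap.algHom_comp_convMul_distrib]
  simp only [toConv_ofConv, LinearMap.comp_id]
  rw [rightCoaction_eq_convMul, hρsSf, mul_assoc, ← mul_assoc (toConv (ι₂ ∘ₗ _)), hι₂, one_mul]

/-- `a ⊗ c ↦ a * s (S c₁) ⊗ c₂` -/
noncomputable def untwist : H ⊗[R] K →ₗ[R] H ⊗[R] K :=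
  LinearMap.mul' R (H ⊗[R] K) ∘ₗ
    map ι₁ (toConv (ι₁ ∘ₗ s.toLinearMap ∘ₗ antipode R) * toConv ι₂).ofConv

lemma untwist_includeLeft_mul (x : H) (y : H ⊗[R] K) :
    untwist s ((x ⊗ₜ 1) * y) = (x ⊗ₜ 1) * untwist s y := by
  induction y using TensorProduct.induction_on with
  | zero => simp
  | tmul a c =>
    simp only [untwist, LinearMap.comp_apply, Algebra.TensorProduct.tmul_mul_tmul, mul_one, one_mul,
      map_tmul, LinearMap.mul'_apply, AlgHom.toLinearMap_apply,
      Algebra.TensorProduct.includeLeft_apply, ← mul_assoc]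
  | add y y' hy hy' => simp only [mul_add, map_add, hy, hy']

lemma untwist_rightCoaction_section (hfs : ∀ b, f (s b) = b) (b : K) :
    untwist s (rightCoaction f (s b)) = 1 ⊗ₜ b := by
  have hinv : toConv (ι₁ ∘ₗ s.toLinearMap) * toConv (ι₁ ∘ₗ s.toLinearMap ∘ₗ antipode R) = 1 :=
    (Algebra.TensorProduct.includeLeft.comp (s : K →ₐ[R] H)).convMul_comp_antipode_self
  have h : untwist s ∘ₗ (rightCoaction f).toLinearMap ∘ₗ s.toLinearMap = ι₂ := by
    rw [rightCoaction_comp_section f s hfs]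
    apply WithConv.toConv_injective
    calc _ = toConv (ι₁ ∘ₗ s.toLinearMap) *
          (toConv (ι₁ ∘ₗ s.toLinearMap ∘ₗ antipode R) * toConv ι₂) := by
          rw [untwist, LinearMap.comp_assoc, ← LinearMap.comp_assoc (comul (R := R))
            (map s.toLinearMap LinearMap.id), ← map_comp, LinearMap.comp_id]
          rfl
      _ = toConv ι₂ := by rw [← mul_assoc, hinv, one_mul]
  exact LinearMap.congr_fun h b

end HopfProjection

section RadfordMap

variable (f : A →ₐc[k] B) (s : B →ₐc[k] A)

lemma radfordMap_tmul (x : hopfKer f) (b : B) : radfordMap f s (x ⊗ₜ b) = x * s b := by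
  simp [radfordMap]

lemma mem_hopfKer_iff {a : A} : a ∈ hopfKer f ↔ rightCoaction f a = a ⊗ₜ 1 := by
  simp only [hopfKer, LinearMap.mem_ker, LinearMap.sub_apply, sub_eq_zero]
  rfl

lemma hopfKerProj_mem_hopfKer (hfs : ∀ b, f (s b) = b) (a : A) : hopfKerProj f s a ∈ hopfKer f :=
  (mem_hopfKer_iff f).2 (LinearMap.congr_fun (rightCoaction_comp_hopfKerProj f s hfs) a)

lemma untwist_rightCoaction_mul_section (hfs : ∀ b, f (s b) = b) {x : A} (hx : x ∈ hopfKer f)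
    (b : B) : untwist s (rightCoaction f (x * s b)) = x ⊗ₜ b := by
  rw [map_mul, (mem_hopfKer_iff f).1 hx, untwist_includeLeft_mul,
    untwist_rightCoaction_section f s hfs, Algebra.TensorProduct.tmul_mul_tmul, mul_one, one_mul]

lemma untwist_comp_rightCoaction_comp_radfordMap (hfs : ∀ b, f (s b) = b) :
    untwist s ∘ₗ (rightCoaction f).toLinearMap ∘ₗ radfordMap f s =
      (hopfKer f).subtype.rTensor B := by
  refine TensorProduct.ext' fun x b ↦ ?_
  rw [LinearMap.comp_apply, LinearMap.comp_apply, radfordMap_tmul, AlgHom.toLinearMap_apply,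
    untwist_rightCoaction_mul_section f s hfs x.2, LinearMap.rTensor_tmul, Submodule.subtype_apply]

noncomputable def radfordInv (hfs : ∀ b, f (s b) = b) : A →ₗ[k] hopfKer f ⊗[k] B :=
  map ((hopfKerProj f s).codRestrict (hopfKer f) (hopfKerProj_mem_hopfKer f s hfs))
    f.toLinearMap ∘ₗ comul

lemma radfordMap_comp_radfordInv (hfs : ∀ b, f (s b) = b) :
    radfordMap f s ∘ₗ radfordInv f s hfs = LinearMap.id := by
  have h : radfordMap f s ∘ₗ map ((hopfKerProj f s).codRestrict (hopfKer f)
      (hopfKerProj_mem_hopfKer f s hfs)) f.toLinearMap =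
      LinearMap.mul' k A ∘ₗ map (hopfKerProj f s) (s.toLinearMap ∘ₗ f.toLinearMap) := by
    refine TensorProduct.ext' fun x y ↦ ?_
    simp only [LinearMap.comp_apply, map_tmul, radfordMap_tmul, LinearMap.codRestrict_apply,
      LinearMap.mul'_apply]
    rfl
  rw [radfordInv, ← LinearMap.comp_assoc, h]
  exact congrArg ofConv (hopfKerProj_convMul f s)

end RadfordMap

theorem radfordMap_bijective_general
    (f : A →ₐc[k] B) (s : B →ₐc[k] A) (hfs : ∀ b, f (s b) = b) :
    Function.Bijective (radfordMap f s) := by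
  constructor
  · refine Function.Injective.of_comp (f := untwist s ∘ₗ (rightCoaction f).toLinearMap) ?_
    rw [← LinearMap.coe_comp, LinearMap.comp_assoc,
      untwist_comp_rightCoaction_comp_radfordMap f s hfs]
    exact Module.Flat.rTensor_preserves_injective_linearMap _ (hopfKer f).injective_subtype
  · exact Function.RightInverse.surjective
      (LinearMap.congr_fun (radfordMap_comp_radfordInv f s hfs))

/-- Let `A` be a cocommutative Hopf algebra over a field `k`, and let
`f : A → B` be a Hopf algebra morphism admitting a Hopf algebra section `s`
(`f ∘ s = id`).  Then `Hker f ⊗ B → A`, `x ⊗ b ↦ x * s b`, is a linear isomorphism. -/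
theorem radfordMap_bijective
    (hcc : ∀ a : A, TensorProduct.comm k A A (Coalgebra.comul a) = Coalgebra.comul a)
    (f : A →ₐc[k] B) (s : B →ₐc[k] A) (hfs : ∀ b, f (s b) = b) :
    Function.Bijective (radfordMap f s) :=
  radfordMap_bijective_general f s hfs
end

section
/- Let G be a simplicial group, n ≥ 2, and 0 ≤ k < n-1. If the map y_{(n,k)} : G_n^{(k+1)} × G_{n-1}^{(k)} → G_n^{(k)}, (x, y) ↦ x · s_{n-1-k}(y), is a bijection, then the corresponding map y_{(n-1,k)} : G_{n-1}^{(k+1)} × G_{n-2}^{(k)} → G_{n-1}^{(k)}, (x, y) ↦ x · s_{n-2-k}(y), is also a bijection. -/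
/-!
A simplicial group is given by groups `G n`, face maps `d n i : G (n+1) →* G n`
(for `i ≤ n+1`) and degeneracy maps `s n i : G n →* G (n+1)` (for `i ≤ n`),
subject to the simplicial identities (taken as hypotheses below).
-/

variable (G : ℕ → Type) [∀ n, Group (G n)]

lemma mem_piece_iff (d : ∀ n, ℕ → (G (n + 1) →* G n)) (n k : ℕ) (x : G (n + 1)) :
    x ∈ piece G d (n + 1) k ↔ ∀ i, n + 2 - k ≤ i → i ≤ n + 1 → d n i x = 1 := by
  simp [piece, Subgroup.mem_iInf, Finset.mem_Icc, MonoidHom.mem_ker, and_imp]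

lemma s0_piece (d : ∀ n, ℕ → (G (n + 1) →* G n)) (s : ∀ n, ℕ → (G n →* G (n + 1)))
    (hds₄ : ∀ (n i j : ℕ), j < i → i ≤ n + 1 → ∀ x : G (n + 1),
      d (n + 1) (i + 1) (s (n + 1) j x) = s n j (d n i x))
    (n k : ℕ) (hk : k ≤ n + 1) (x : G (n + 1)) (hx : x ∈ piece G d (n + 1) k) :
    s (n + 1) 0 x ∈ piece G d (n + 1 + 1) k := by
  rw [mem_piece_iff] at hx ⊢
  intro i h1 h2
  obtain ⟨i', rfl⟩ : ∃ i', i = i' + 1 := ⟨i - 1, by omega⟩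
  rw [hds₄ n i' 0 (by omega) (by omega), hx i' (by omega) (by omega), map_one]

lemma d0_piece (d : ∀ n, ℕ → (G (n + 1) →* G n))
    (hdd : ∀ (n i j : ℕ), i ≤ j → j ≤ n + 1 → ∀ x : G (n + 2),
      d n i (d (n + 1) (j + 1) x) = d n j (d (n + 1) i x))
    (n k : ℕ) (x : G (n + 1 + 1)) (hx : x ∈ piece G d (n + 1 + 1) k) :
    d (n + 1) 0 x ∈ piece G d (n + 1) k := by
  rw [mem_piece_iff] at hx ⊢
  intro i h1 h2
  rw [← hdd n 0 i (by omega) (by omega), hx (i + 1) (by omega) (by omega), map_one]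

lemma P1 (d : ∀ n, ℕ → (G (n + 1) →* G n)) (s : ∀ n, ℕ → (G n →* G (n + 1)))
    (hds₄ : ∀ (n i j : ℕ), j < i → i ≤ n + 1 → ∀ x : G (n + 1),
      d (n + 1) (i + 1) (s (n + 1) j x) = s n j (d n i x))
    (k t : ℕ) (y : G (k + t)) (hy : y ∈ piece G d (k + t) k) :
    s (k + t) 0 y ∈ piece G d (k + t + 1) k := by
  match k, t with
  | 0, 0 =>
    rw [mem_piece_iff]
    intro i h1 h2
    omega
  | k' + 1, 0 => exact s0_piece G d s hds₄ k' (k' + 1) (by omega) y hy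
  | k, t' + 1 => exact s0_piece G d s hds₄ (k + t') k (by omega) y hy

lemma P2 (d : ∀ n, ℕ → (G (n + 1) →* G n))
    (hdd : ∀ (n i j : ℕ), i ≤ j → j ≤ n + 1 → ∀ x : G (n + 2),
      d n i (d (n + 1) (j + 1) x) = d n j (d (n + 1) i x))
    (k t : ℕ) (Y : G (k + t + 1)) (hY : Y ∈ piece G d (k + t + 1) k) :
    d (k + t) 0 Y ∈ piece G d (k + t) k := by
  match k, t with
  | 0, 0 => exact Subgroup.mem_top _
  | k' + 1, 0 => exact d0_piece G d hdd k' (k' + 1) Y hY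
  | k, t' + 1 => exact d0_piece G d hdd (k + t') k Y hY

/-- Let `n ≥ 2` and `0 ≤ k < n - 1` (parametrised by `n = k + t + 2`
with `t ≥ 0`).  If the map `y_{(n,k)} : G_n^{(k+1)} × G_{n-1}^{(k)} → G_n^{(k)}`,
`(x, y) ↦ x * s_{n-1-k} y`, is a bijection, then so is the corresponding map
`y_{(n-1,k)} : G_{n-1}^{(k+1)} × G_{n-2}^{(k)} → G_{n-1}^{(k)}`, `(x, y) ↦ x * s_{n-2-k} y`. -/
theorem y_bijective_descend
    (d : ∀ n, ℕ → (G (n + 1) →* G n)) (s : ∀ n, ℕ → (G n →* G (n + 1)))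
    (hdd : ∀ (n i j : ℕ), i ≤ j → j ≤ n + 1 → ∀ x : G (n + 2),
      d n i (d (n + 1) (j + 1) x) = d n j (d (n + 1) i x))
    (hds₁ : ∀ (n i j : ℕ), i < j → j ≤ n + 1 → ∀ x : G (n + 1),
      d (n + 1) i (s (n + 1) j x) = s n (j - 1) (d n i x))
    (hds₂ : ∀ (n j : ℕ), j ≤ n → ∀ x : G n, d n j (s n j x) = x)
    (hds₃ : ∀ (n j : ℕ), j ≤ n → ∀ x : G n, d n (j + 1) (s n j x) = x)
    (hds₄ : ∀ (n i j : ℕ), j < i → i ≤ n + 1 → ∀ x : G (n + 1),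
      d (n + 1) (i + 1) (s (n + 1) j x) = s n j (d n i x))
    (hss : ∀ (n i j : ℕ), i ≤ j → j ≤ n → ∀ x : G n,
      s (n + 1) i (s n j x) = s (n + 1) (j + 1) (s n i x))
    (k t : ℕ)
    (h : Set.BijOn
      (fun p : G (k + t + 2) × G (k + t + 1) => p.1 * s (k + t + 1) (t + 1) p.2)
      ((piece G d (k + t + 2) (k + 1) : Set (G (k + t + 2))) ×ˢ
        (piece G d (k + t + 1) k : Set (G (k + t + 1))))
      (piece G d (k + t + 2) k : Set (G (k + t + 2)))) :
    Set.BijOn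
      (fun p : G (k + t + 1) × G (k + t) => p.1 * s (k + t) t p.2)
      ((piece G d (k + t + 1) (k + 1) : Set (G (k + t + 1))) ×ˢ
        (piece G d (k + t) k : Set (G (k + t))))
      (piece G d (k + t + 1) k : Set (G (k + t + 1))) := by
  have key : ∀ (x : G (k + t + 1)) (y : G (k + t)),
      s (k + t + 1) 0 (x * s (k + t) t y)
        = s (k + t + 1) 0 x * s (k + t + 1) (t + 1) (s (k + t) 0 y) := by
    intro x y
    rw [map_mul, hss (k + t) 0 t (by omega) (by omega) y]
  have keyd : ∀ (X : G (k + t + 2)) (Y : G (k + t + 1)),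
      d (k + t + 1) 0 (X * s (k + t + 1) (t + 1) Y)
        = d (k + t + 1) 0 X * s (k + t) t (d (k + t) 0 Y) := by
    intro X Y
    rw [map_mul, hds₁ (k + t) 0 (t + 1) (by omega) (by omega) Y]
    norm_num
  refine ⟨?_, ?_, ?_⟩
  · -- MapsTo
    rintro ⟨x, y⟩ ⟨hx, hy⟩
    have hm : ((s (k + t + 1) 0 x, s (k + t) 0 y) : G (k + t + 2) × G (k + t + 1)) ∈
        (piece G d (k + t + 2) (k + 1) : Set (G (k + t + 2))) ×ˢ
          (piece G d (k + t + 1) k : Set (G (k + t + 1))) :=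
      ⟨s0_piece G d s hds₄ (k + t) (k + 1) (by omega) x hx, P1 G d s hds₄ k t y hy⟩
    have h2 : s (k + t + 1) 0 x * s (k + t + 1) (t + 1) (s (k + t) 0 y) ∈
        (piece G d (k + t + 2) k : Set (G (k + t + 2))) := h.mapsTo hm
    rw [← key] at h2
    have h3 := d0_piece G d hdd (k + t) k _ h2
    rw [hds₂ (k + t + 1) 0 (Nat.zero_le _)] at h3
    exact h3
  · -- InjOn
    rintro ⟨x, y⟩ ⟨hx, hy⟩ ⟨x', y'⟩ ⟨hx', hy'⟩ heq
    simp only at heq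
    have ha : ((s (k + t + 1) 0 x, s (k + t) 0 y) : G (k + t + 2) × G (k + t + 1)) ∈
        (piece G d (k + t + 2) (k + 1) : Set (G (k + t + 2))) ×ˢ
          (piece G d (k + t + 1) k : Set (G (k + t + 1))) :=
      ⟨s0_piece G d s hds₄ (k + t) (k + 1) (by omega) x hx, P1 G d s hds₄ k t y hy⟩
    have hb : ((s (k + t + 1) 0 x', s (k + t) 0 y') : G (k + t + 2) × G (k + t + 1)) ∈
        (piece G d (k + t + 2) (k + 1) : Set (G (k + t + 2))) ×ˢ
          (piece G d (k + t + 1) k : Set (G (k + t + 1))) :=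
      ⟨s0_piece G d s hds₄ (k + t) (k + 1) (by omega) x' hx', P1 G d s hds₄ k t y' hy'⟩
    have hFeq : s (k + t + 1) 0 x * s (k + t + 1) (t + 1) (s (k + t) 0 y)
        = s (k + t + 1) 0 x' * s (k + t + 1) (t + 1) (s (k + t) 0 y') := by
      rw [← key, ← key, heq]
    have e := h.2.1 ha hb hFeq
    rw [Prod.mk.injEq] at e
    obtain ⟨ef, es⟩ := e
    have e1 : x = x' := by
      have := congrArg (d (k + t + 1) 0) ef
      rwa [hds₂ (k + t + 1) 0 (Nat.zero_le _), hds₂ (k + t + 1) 0 (Nat.zero_le _)] at this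
    have e2 : y = y' := by
      have := congrArg (d (k + t) 0) es
      rwa [hds₂ (k + t) 0 (Nat.zero_le _), hds₂ (k + t) 0 (Nat.zero_le _)] at this
    simp [e1, e2]
  · -- SurjOn
    intro z hz
    have hz2 : s (k + t + 1) 0 z ∈ (piece G d (k + t + 2) k : Set (G (k + t + 2))) :=
      s0_piece G d s hds₄ (k + t) k (by omega) z hz
    obtain ⟨p, hp, hpe⟩ := h.2.2 hz2
    refine ⟨(d (k + t + 1) 0 p.1, d (k + t) 0 p.2),
      ⟨d0_piece G d hdd (k + t) (k + 1) p.1 hp.1, P2 G d hdd k t p.2 hp.2⟩, ?_⟩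
    show d (k + t + 1) 0 p.1 * s (k + t) t (d (k + t) 0 p.2) = z
    have hpe' : p.1 * s (k + t + 1) (t + 1) p.2 = s (k + t + 1) 0 z := hpe
    rw [← keyd, hpe', hds₂ (k + t + 1) 0 (Nat.zero_le _)]
end
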